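/- Let (G, ω, τ) be a weighted graph in which every vertex u satisfies either τ(u) = μ or τ(u) = ∑_{e incident to u} ω(e), where μ = min{ω(e) : e ∈ E(G)} > 0. Let V₁ = {u : τ(u) = μ}. Then a target vector exists for (G, ω, τ) of total size ∑_{v ∈ V(G)} τ(v) − ∑_{e ∈ E(G)} ω(e) + ∑_{C} (∑_{e ∈ E(C)} ω(e) − (|V(C)|−1)μ), where the last sum is over the connected components C of G[V₁], and no target vector has smaller total size. -/
import Mathlib


open Finset

variable {V : Type*}

/-- Total weight of edges between `x` and active set `A`. -/
def Influence [Fintype V] [DecidableEq V] (G : SimpleGraph V) [DecidableRel G.Adj]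
    (ω : Sym2 V → ℚ) (A : Finset V) (x : V) : ℚ :=
  ∑ y ∈ A.filter (G.Adj x), ω s(x, y)

/-- Weighted activation process started from `A₀`. -/
def ActiveW [Fintype V] [DecidableEq V] (G : SimpleGraph V) [DecidableRel G.Adj]
    (ω : Sym2 V → ℚ) (τ : V → ℚ) (A₀ : Finset V) : ℕ → Finset V
  | 0 => A₀
  | t + 1 => ActiveW G ω τ A₀ t ∪
      Finset.univ.filter (fun x => τ x ≤ Influence G ω (ActiveW G ω τ A₀ t) x)

/-- `A₀` is a target set (dynamic monopoly): every vertex eventually activates. -/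
def IsTargetSetW [Fintype V] [DecidableEq V] (G : SimpleGraph V) [DecidableRel G.Adj]
    (ω : Sym2 V → ℚ) (τ : V → ℚ) (A₀ : Finset V) : Prop :=
  ∀ v : V, ∃ t, v ∈ ActiveW G ω τ A₀ t

/-- Incentive activation process for incentive assignment `p`. -/
def ActiveP [Fintype V] [DecidableEq V] (G : SimpleGraph V) [DecidableRel G.Adj]
    (ω : Sym2 V → ℚ) (τ : V → ℚ) (p : V → ℚ) : ℕ → Finset V
  | 0 => Finset.univ.filter (fun v => τ v ≤ p v)
  | t + 1 => ActiveP G ω τ p t ∪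
      Finset.univ.filter (fun x => τ x ≤ Influence G ω (ActiveP G ω τ p t) x + p x)

/-- `p` is a target vector: its incentive process activates every vertex. -/
def IsTargetVector [Fintype V] [DecidableEq V] (G : SimpleGraph V) [DecidableRel G.Adj]
    (ω : Sym2 V → ℚ) (τ : V → ℚ) (p : V → ℚ) : Prop :=
  ∀ v : V, ∃ t, v ∈ ActiveP G ω τ p t

/-- `τ` is a degenerate threshold assignment: every nonempty induced subgraph
(given by its vertex set `S`) has a vertex whose threshold is at least the total
weight of the edges of the induced subgraph incident to it. -/
def DegenerateW [Fintype V] [DecidableEq V] (G : SimpleGraph V) [DecidableRel G.Adj]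
    (ω : Sym2 V → ℚ) (τ : V → ℚ) : Prop :=
  ∀ S : Finset V, S.Nonempty → ∃ x ∈ S, Influence G ω S x ≤ τ x

/-- `u` is a degeneracy ordering: each vertex's threshold is at least the total
weight of edges to earlier vertices. -/
def IsDegOrder [Fintype V] [DecidableEq V] (G : SimpleGraph V) [DecidableRel G.Adj]
    (ω : Sym2 V → ℚ) (τ : V → ℚ) (u : Fin (Fintype.card V) ≃ V) : Prop :=
  ∀ i, (∑ j ∈ Finset.univ.filter (fun j => j < i ∧ G.Adj (u i) (u j)), ω s(u i, u j)) ≤ τ (u i)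

/-- Unweighted activation process. -/
def ActiveU [Fintype V] [DecidableEq V] (G : SimpleGraph V) [DecidableRel G.Adj]
    (τ : V → ℕ) (A₀ : Finset V) : ℕ → Finset V
  | 0 => A₀
  | t + 1 => ActiveU G τ A₀ t ∪
      Finset.univ.filter (fun x => τ x ≤ ((ActiveU G τ A₀ t).filter (G.Adj x)).card)

def IsTargetSetU [Fintype V] [DecidableEq V] (G : SimpleGraph V) [DecidableRel G.Adj]
    (τ : V → ℕ) (A₀ : Finset V) : Prop :=
  ∀ v : V, ∃ t, v ∈ ActiveU G τ A₀ t

noncomputable instance {W : Type*} (G : SimpleGraph W) [DecidableRel G.Adj] :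
    DecidableEq G.ConnectedComponent := Classical.decEq _

instance {W : Type*} (G : SimpleGraph W) [DecidableRel G.Adj] (s : Set W)
    [DecidablePred (· ∈ s)] : DecidableRel (G.induce s).Adj :=
  fun a b => inferInstanceAs (Decidable (G.Adj a b))


section Helpers
variable [Fintype V] [DecidableEq V] (G : SimpleGraph V) [DecidableRel G.Adj]
  (ω : Sym2 V → ℚ) (τ p : V → ℚ)

lemma influence_nonneg (hpos : ∀ e ∈ G.edgeSet, 0 < ω e) (A : Finset V) (x : V) :
    0 ≤ Influence G ω A x :=
  Finset.sum_nonneg fun _ hy => (hpos _ (mem_filter.1 hy).2).le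

lemma influence_mono (hpos : ∀ e ∈ G.edgeSet, 0 < ω e) {A B : Finset V} (h : A ⊆ B) (x : V) :
    Influence G ω A x ≤ Influence G ω B x :=
  Finset.sum_le_sum_of_subset_of_nonneg (filter_subset_filter _ h)
    (fun _ hy _ => (hpos _ (mem_filter.1 hy).2).le)

lemma single_le_influence (hpos : ∀ e ∈ G.edgeSet, 0 < ω e) {A : Finset V} {x y : V}
    (hy : y ∈ A) (ha : G.Adj x y) : ω s(x,y) ≤ Influence G ω A x :=
  Finset.single_le_sum (fun _ hz => (hpos _ (mem_filter.1 hz).2).le)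
    (mem_filter.2 ⟨hy, ha⟩)

lemma activeP_mono : Monotone (ActiveP G ω τ p) :=
  monotone_nat_of_le_succ fun _ => subset_union_left

lemma mem_activeP_succ_of_le {t : ℕ} {x : V}
    (h : τ x ≤ Influence G ω (ActiveP G ω τ p t) x + p x) :
    x ∈ ActiveP G ω τ p (t+1) :=
  mem_union_right _ (mem_filter.2 ⟨mem_univ _, h⟩)

omit [Fintype V] [DecidableEq V] in
lemma sum_pairs (s t : Finset V) (Q : V → V → Prop) [∀ x y, Decidable (Q x y)]
    (f : V → V → ℚ) :
    ∑ d ∈ (s ×ˢ t).filter (fun d => Q d.1 d.2), f d.1 d.2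
      = ∑ x ∈ s, ∑ y ∈ t.filter (Q x), f x y := by
  rw [Finset.sum_filter, Finset.sum_product]
  simp [Finset.sum_filter]

end Helpers

section Fiber
variable [Fintype V] [DecidableEq V]

lemma pair_fiber (a b : V) :
    ((univ : Finset (V × V)).filter (fun d => s(d.1, d.2) = s(a, b)))
      = ({(a, b), (b, a)} : Finset (V × V)) := by
  ext ⟨x, y⟩
  simp [Sym2.eq_iff, Prod.ext_iff, or_comm, and_comm]

lemma fiber_sum (R : V → V → Prop) [∀ x y, Decidable (R x y)] (f : Sym2 V → ℚ)
    (a b : V) (hab : a ≠ b) :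
    ∑ d ∈ (univ : Finset (V × V)).filter (fun d => s(d.1, d.2) = s(a, b) ∧ R d.1 d.2),
        f s(d.1, d.2)
      = (if R a b then f s(a, b) else 0) + (if R b a then f s(a, b) else 0) := by
  have h : (univ : Finset (V × V)).filter (fun d => s(d.1, d.2) = s(a, b) ∧ R d.1 d.2)
      = ({(a, b), (b, a)} : Finset (V × V)).filter (fun d => R d.1 d.2) := by
    rw [← pair_fiber a b, filter_filter]
  rw [h, sum_filter, sum_insert (by simp [Prod.ext_iff, hab]), sum_singleton]
  have h1 : s(b, a) = s(a, b) := Sym2.eq_swap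
  simp [h1]

lemma sum_pairs_filter (S : Finset (Sym2 V)) (R : V → V → Prop) [∀ x y, Decidable (R x y)]
    (f : Sym2 V → ℚ) :
    ∑ d ∈ (univ : Finset (V × V)).filter (fun d => s(d.1, d.2) ∈ S ∧ R d.1 d.2), f s(d.1, d.2)
      = ∑ e ∈ S, ∑ d ∈ (univ : Finset (V × V)).filter (fun d => s(d.1, d.2) = e ∧ R d.1 d.2),
          f s(d.1, d.2) := by
  rw [← Finset.sum_fiberwise_of_maps_to (g := fun d : V × V => s(d.1, d.2))
      (fun d hd => (mem_filter.1 hd).2.1)]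
  apply Finset.sum_congr rfl
  intro e he
  apply Finset.sum_congr _ (fun _ _ => rfl)
  ext d
  simp only [mem_filter, mem_univ, true_and]
  constructor
  · rintro ⟨⟨_, hR⟩, heq⟩; exact ⟨heq, hR⟩
  · rintro ⟨hpq, hR⟩; exact ⟨⟨hpq ▸ he, hR⟩, hpq⟩

lemma sum_pairs_oriented (S : Finset (Sym2 V)) (hS : ∀ e ∈ S, ¬ e.IsDiag)
    (R : V → V → Prop) [∀ x y, Decidable (R x y)] (f : Sym2 V → ℚ)
    (hR : ∀ a b, s(a, b) ∈ S → (R a b ↔ ¬ R b a)) :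
    ∑ d ∈ (univ : Finset (V × V)).filter (fun d => s(d.1, d.2) ∈ S ∧ R d.1 d.2), f s(d.1, d.2)
      = ∑ e ∈ S, f e := by
  rw [sum_pairs_filter]
  apply Finset.sum_congr rfl
  intro e he
  induction e using Sym2.ind with
  | _ a b =>
    have hab : a ≠ b := by simpa using hS _ he
    rw [fiber_sum R f a b hab]
    by_cases h : R a b
    · have h2 : ¬ R b a := (hR a b he).1 h
      simp [h, h2]
    · have h2 : R b a := by
        by_contra h2
        exact h ((hR a b he).2 h2)
      simp [h, h2]

lemma sum_pairs_two (S : Finset (Sym2 V)) (hS : ∀ e ∈ S, ¬ e.IsDiag) (f : Sym2 V → ℚ) :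
    ∑ d ∈ (univ : Finset (V × V)).filter (fun d => s(d.1, d.2) ∈ S), f s(d.1, d.2)
      = 2 * ∑ e ∈ S, f e := by
  have h0 := sum_pairs_filter S (fun _ _ => True) f
  simp only [and_true] at h0
  rw [h0, Finset.mul_sum]
  apply Finset.sum_congr rfl
  intro e he
  induction e using Sym2.ind with
  | _ a b =>
    have hab : a ≠ b := by simpa using hS _ he
    have h1 := fiber_sum (fun _ _ => True) f a b hab
    simp only [and_true, if_true] at h1 ⊢
    rw [h1]; ring

lemma sum_pairs_ge (S : Finset (Sym2 V)) (hS : ∀ e ∈ S, ¬ e.IsDiag)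
    (R : V → V → Prop) [∀ x y, Decidable (R x y)] (f : Sym2 V → ℚ)
    (hR : ∀ a b, s(a, b) ∈ S → (R a b ∨ R b a)) (hf : ∀ e ∈ S, 0 ≤ f e) :
    ∑ e ∈ S, f e
      ≤ ∑ d ∈ (univ : Finset (V × V)).filter (fun d => s(d.1, d.2) ∈ S ∧ R d.1 d.2),
          f s(d.1, d.2) := by
  rw [sum_pairs_filter]
  apply Finset.sum_le_sum
  intro e he
  induction e using Sym2.ind with
  | _ a b =>
    have hab : a ≠ b := by simpa using hS _ he
    rw [fiber_sum R f a b hab]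
    have hfe := hf _ he
    rcases hR a b he with h | h <;> by_cases h2 : R b a <;> by_cases h3 : R a b <;>
      simp_all <;> linarith

end Fiber


section Comp
variable [Fintype V] [DecidableEq V] (G : SimpleGraph V) [DecidableRel G.Adj]
  (ω : Sym2 V → ℚ) (Vs : Set V) [DecidablePred (· ∈ Vs)]

lemma comp_card_sum :
    ∑ C : (G.induce Vs).ConnectedComponent,
        ((Finset.univ.filter (fun v : Vs => (G.induce Vs).connectedComponentMk v = C)).card : ℚ)
      = (Fintype.card Vs : ℚ) := by
  have h := Finset.card_eq_sum_card_fiberwise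
      (f := fun v : Vs => (G.induce Vs).connectedComponentMk v)
      (s := univ) (t := univ) (fun x _ => mem_univ _)
  rw [← Finset.card_univ, h]
  push_cast
  rfl

lemma comp_edge_sum :
    ∑ C : (G.induce Vs).ConnectedComponent,
        ∑ e ∈ (G.induce Vs).edgeFinset.filter
            (fun e => ∀ v, v ∈ e → (G.induce Vs).connectedComponentMk v = C),
          ω (e.map Subtype.val)
      = ∑ e ∈ G.edgeFinset.filter (fun e => ∀ v ∈ e, v ∈ Vs), ω e := by
  have hstep : ∀ C : (G.induce Vs).ConnectedComponent,
      (G.induce Vs).edgeFinset.filter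
          (fun e => ∀ v, v ∈ e → (G.induce Vs).connectedComponentMk v = C)
        = (G.induce Vs).edgeFinset.filter
          (fun e => (G.induce Vs).connectedComponentMk e.out.1 = C) := by
    intro C
    apply Finset.filter_congr
    intro e he
    constructor
    · intro h; exact h _ (Sym2.out_fst_mem e)
    · intro h v hv
      obtain ⟨w, rfl⟩ := Sym2.mem_iff_exists.1 hv
      have hadj : (G.induce Vs).Adj v w := by
        rwa [← SimpleGraph.mem_edgeSet, ← SimpleGraph.mem_edgeFinset]
      have hmem := Sym2.out_fst_mem s(v, w)
      rw [Sym2.mem_iff] at hmem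
      rcases hmem with h1 | h1
      · rwa [h1] at h
      · rw [h1] at h
        rwa [SimpleGraph.ConnectedComponent.connectedComponentMk_eq_of_adj hadj]
  calc ∑ C : (G.induce Vs).ConnectedComponent,
        ∑ e ∈ (G.induce Vs).edgeFinset.filter
            (fun e => ∀ v, v ∈ e → (G.induce Vs).connectedComponentMk v = C),
          ω (e.map Subtype.val)
      = ∑ e ∈ (G.induce Vs).edgeFinset, ω (e.map Subtype.val) := by
        rw [Finset.sum_congr rfl (fun C _ => by rw [hstep C])]
        exact Finset.sum_fiberwise_of_maps_to (fun e _ => mem_univ _) _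
    _ = ∑ e ∈ G.edgeFinset.filter (fun e => ∀ v ∈ e, v ∈ Vs), ω e := by
        apply Finset.sum_bij (fun e _ => e.map Subtype.val)
        · intro e he
          induction e using Sym2.ind with
          | _ a b =>
            rw [SimpleGraph.mem_edgeFinset, SimpleGraph.mem_edgeSet] at he
            simp only [Sym2.map_pair_eq, mem_filter, SimpleGraph.mem_edgeFinset,
              SimpleGraph.mem_edgeSet]
            refine ⟨he, ?_⟩
            intro v hv
            rw [Sym2.mem_iff] at hv
            rcases hv with rfl | rfl
            · exact a.2
            · exact b.2
        · intro e1 _ e2 _ h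
          exact Sym2.map.injective Subtype.val_injective h
        · intro e he
          rw [mem_filter] at he
          obtain ⟨he1, he2⟩ := he
          induction e using Sym2.ind with
          | _ x y =>
            rw [SimpleGraph.mem_edgeFinset, SimpleGraph.mem_edgeSet] at he1
            have hx : x ∈ Vs := he2 x (Sym2.mem_mk_left x y)
            have hy : y ∈ Vs := he2 y (Sym2.mem_mk_right x y)
            refine ⟨s(⟨x, hx⟩, ⟨y, hy⟩), ?_, ?_⟩
            · rw [SimpleGraph.mem_edgeFinset, SimpleGraph.mem_edgeSet]
              exact he1
            · rw [Sym2.map_pair_eq]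
        · intro e _
          rfl
end Comp

section HS
variable [Fintype V] [DecidableEq V] (G : SimpleGraph V) [DecidableRel G.Adj]
  (ω : Sym2 V → ℚ)

lemma influence_double_sum (c1 : V → Prop) [DecidablePred c1] (P : V → V → Prop)
    [∀ x y, Decidable (P x y)] :
    ∑ v ∈ univ.filter c1, Influence G ω (univ.filter (P v)) v
      = ∑ d ∈ (univ : Finset (V × V)).filter
          (fun d => s(d.1, d.2) ∈ G.edgeFinset ∧ (c1 d.1 ∧ P d.1 d.2)), ω s(d.1, d.2) := by
  have h1 : ∀ v, Influence G ω (univ.filter (P v)) v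
      = ∑ y ∈ univ.filter (fun y => P v y ∧ G.Adj v y), ω s(v, y) := by
    intro v
    rw [Influence, filter_filter]
  rw [Finset.sum_congr rfl (fun v _ => h1 v),
    ← sum_pairs (univ.filter c1) univ (fun x y => P x y ∧ G.Adj x y) (fun x y => ω s(x, y))]
  apply Finset.sum_congr _ (fun _ _ => rfl)
  ext d
  simp only [mem_filter, mem_product, mem_univ, true_and, and_true,
    SimpleGraph.mem_edgeFinset, SimpleGraph.mem_edgeSet]
  tauto
end HS


set_option maxHeartbeats 1600000

section Split
variable [Fintype V] [DecidableEq V] (G : SimpleGraph V) [DecidableRel G.Adj]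
  (ω : Sym2 V → ℚ) (q : V → Prop) [DecidablePred q]

lemma handshake_one (hpos : ∀ e ∈ G.edgeSet, 0 < ω e) :
    ∑ v ∈ univ.filter (fun v => ¬ q v), Influence G ω univ v
      = (∑ e ∈ G.edgeFinset.filter (fun e => ¬(∀ v ∈ e, q v) ∧ ¬(∀ v ∈ e, ¬ q v)), ω e)
        + 2 * ∑ e ∈ G.edgeFinset.filter (fun e => ∀ v ∈ e, ¬ q v), ω e := by
  have h0 : ∀ v : V, Influence G ω univ v
      = Influence G ω (univ.filter (fun _ => True)) v := by
    intro v; rw [Finset.filter_true]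
  rw [Finset.sum_congr rfl (fun v _ => h0 v),
    influence_double_sum G ω (fun v => ¬ q v) (fun _ _ => True),
    ← Finset.sum_filter_add_sum_filter_not _ (fun d : V × V => q d.2)]
  congr 1
  · rw [filter_filter]
    have he : (univ : Finset (V × V)).filter
        (fun d => (s(d.1, d.2) ∈ G.edgeFinset ∧ (¬q d.1 ∧ True)) ∧ q d.2)
        = (univ : Finset (V × V)).filter (fun d =>
            s(d.1, d.2) ∈ G.edgeFinset.filter
              (fun e => ¬(∀ v ∈ e, q v) ∧ ¬(∀ v ∈ e, ¬ q v)) ∧ ¬ q d.1) := by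
      ext d
      simp only [mem_filter, mem_univ, true_and, and_true, Sym2.ball]
      tauto
    rw [he]
    refine sum_pairs_oriented _ ?_ (fun x _ => ¬ q x) ω ?_
    · intro e he'
      exact G.not_isDiag_of_mem_edgeSet (SimpleGraph.mem_edgeFinset.1 (mem_filter.1 he').1)
    · intro a b hab
      rw [mem_filter] at hab
      simp only [Sym2.ball] at hab
      tauto
  · rw [filter_filter]
    have he : (univ : Finset (V × V)).filter
        (fun d => (s(d.1, d.2) ∈ G.edgeFinset ∧ (¬q d.1 ∧ True)) ∧ ¬ q d.2)
        = (univ : Finset (V × V)).filter (fun d =>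
            s(d.1, d.2) ∈ G.edgeFinset.filter (fun e => ∀ v ∈ e, ¬ q v)) := by
      ext d
      simp only [mem_filter, mem_univ, true_and, and_true, Sym2.ball]
      tauto
    rw [he]
    refine sum_pairs_two _ ?_ ω
    intro e he'
    exact G.not_isDiag_of_mem_edgeSet (SimpleGraph.mem_edgeFinset.1 (mem_filter.1 he').1)

lemma handshake_ord (ord : V → ℕ) (hord : Function.Injective ord) :
    ∑ v ∈ univ.filter (fun v => ¬ q v),
        Influence G ω (univ.filter (fun u => q u ∨ ord u < ord v)) v
      = (∑ e ∈ G.edgeFinset.filter (fun e => ¬(∀ v ∈ e, q v) ∧ ¬(∀ v ∈ e, ¬ q v)), ω e)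
        + ∑ e ∈ G.edgeFinset.filter (fun e => ∀ v ∈ e, ¬ q v), ω e := by
  rw [influence_double_sum G ω (fun v => ¬ q v) (fun v u => q u ∨ ord u < ord v),
    ← Finset.sum_filter_add_sum_filter_not _ (fun d : V × V => q d.2)]
  congr 1
  · rw [filter_filter]
    have he : (univ : Finset (V × V)).filter
        (fun d => (s(d.1, d.2) ∈ G.edgeFinset ∧ (¬q d.1 ∧ (q d.2 ∨ ord d.2 < ord d.1))) ∧ q d.2)
        = (univ : Finset (V × V)).filter (fun d =>
            s(d.1, d.2) ∈ G.edgeFinset.filter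
              (fun e => ¬(∀ v ∈ e, q v) ∧ ¬(∀ v ∈ e, ¬ q v)) ∧ ¬ q d.1) := by
      ext d
      simp only [mem_filter, mem_univ, true_and, Sym2.ball]
      tauto
    rw [he]
    refine sum_pairs_oriented _ ?_ (fun x _ => ¬ q x) ω ?_
    · intro e he'
      exact G.not_isDiag_of_mem_edgeSet (SimpleGraph.mem_edgeFinset.1 (mem_filter.1 he').1)
    · intro a b hab
      rw [mem_filter] at hab
      simp only [Sym2.ball] at hab
      tauto
  · rw [filter_filter]
    have he : (univ : Finset (V × V)).filter
        (fun d => (s(d.1, d.2) ∈ G.edgeFinset ∧ (¬q d.1 ∧ (q d.2 ∨ ord d.2 < ord d.1))) ∧ ¬ q d.2)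
        = (univ : Finset (V × V)).filter (fun d =>
            s(d.1, d.2) ∈ G.edgeFinset.filter (fun e => ∀ v ∈ e, ¬ q v)
              ∧ ord d.2 < ord d.1) := by
      ext d
      simp only [mem_filter, mem_univ, true_and, Sym2.ball]
      tauto
    rw [he]
    refine sum_pairs_oriented _ ?_ (fun x y => ord y < ord x) ω ?_
    · intro e he'
      exact G.not_isDiag_of_mem_edgeSet (SimpleGraph.mem_edgeFinset.1 (mem_filter.1 he').1)
    · intro a b hab
      have hne : a ≠ b := by
        have := G.not_isDiag_of_mem_edgeSet
          (SimpleGraph.mem_edgeFinset.1 (mem_filter.1 hab).1)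
        simpa using this
      have : ord a ≠ ord b := fun h => hne (hord h)
      omega

lemma handshake_time (hpos : ∀ e ∈ G.edgeSet, 0 < ω e) (time : V → ℕ) :
    ∑ e ∈ G.edgeFinset.filter (fun e => ∀ v ∈ e, ¬ q v), ω e
      ≤ ∑ v ∈ univ.filter (fun v => ¬ q v),
          Influence G ω (univ.filter (fun u => ¬ q u ∧ time v ≤ time u)) v := by
  rw [influence_double_sum G ω (fun v => ¬ q v) (fun v u => ¬ q u ∧ time v ≤ time u)]
  have he : (univ : Finset (V × V)).filter
      (fun d => s(d.1, d.2) ∈ G.edgeFinset ∧ (¬q d.1 ∧ (¬ q d.2 ∧ time d.1 ≤ time d.2)))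
      = (univ : Finset (V × V)).filter (fun d =>
          s(d.1, d.2) ∈ G.edgeFinset.filter (fun e => ∀ v ∈ e, ¬ q v)
            ∧ time d.1 ≤ time d.2) := by
    ext d
    simp only [mem_filter, mem_univ, true_and, Sym2.ball]
    tauto
  rw [he]
  refine sum_pairs_ge _ ?_ (fun x y => time x ≤ time y) ω ?_ ?_
  · intro e he'
    exact G.not_isDiag_of_mem_edgeSet (SimpleGraph.mem_edgeFinset.1 (mem_filter.1 he').1)
  · intro a b _
    omega
  · intro e he'
    exact (hpos _ (SimpleGraph.mem_edgeFinset.1 (mem_filter.1 he').1)).le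

lemma influence_split (A c : V → Prop) [DecidablePred A] [DecidablePred c] (v : V) :
    Influence G ω (univ.filter A) v
      = Influence G ω (univ.filter (fun u => A u ∧ c u)) v
        + Influence G ω (univ.filter (fun u => A u ∧ ¬ c u)) v := by
  unfold Influence
  rw [← Finset.sum_filter_add_sum_filter_not ((univ.filter A).filter (G.Adj v)) (fun u => c u)]
  congr 1 <;> · apply Finset.sum_congr _ (fun _ _ => rfl); rw [filter_filter, filter_filter,
    filter_filter]; apply Finset.filter_congr; intro x _; tauto

lemma influence_congr_filter (A B : V → Prop) [DecidablePred A] [DecidablePred B] (v : V)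
    (h : ∀ y, G.Adj v y → (A y ↔ B y)) :
    Influence G ω (univ.filter A) v = Influence G ω (univ.filter B) v := by
  unfold Influence
  apply Finset.sum_congr _ (fun _ _ => rfl)
  rw [filter_filter, filter_filter]
  apply Finset.filter_congr
  intro x _
  constructor
  · rintro ⟨h1, h2⟩; exact ⟨(h x h2).1 h1, h2⟩
  · rintro ⟨h1, h2⟩; exact ⟨(h x h2).2 h1, h2⟩

end Split


section Value
variable [Fintype V] [DecidableEq V] (G : SimpleGraph V) [DecidableRel G.Adj]
  (ω : Sym2 V → ℚ) (τ : V → ℚ) (μ : ℚ)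

lemma value_eq (hpos : ∀ e ∈ G.edgeSet, 0 < ω e)
    (hτ : ∀ v, τ v = μ ∨ τ v = Influence G ω Finset.univ v) :
    (∑ v : V, τ v - ∑ e ∈ G.edgeFinset, ω e
        + ∑ C : (G.induce {v | τ v = μ}).ConnectedComponent,
            ((∑ e ∈ (G.induce {v | τ v = μ}).edgeFinset.filter
                (fun e => ∀ v, v ∈ e →
                  (G.induce {v | τ v = μ}).connectedComponentMk v = C),
              ω (e.map Subtype.val))
              - (((Finset.univ.filter (fun v : {v | τ v = μ} =>
                  (G.induce {v | τ v = μ}).connectedComponentMk v = C)).card : ℚ) - 1)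
                * μ))
      = (Fintype.card (G.induce {v | τ v = μ}).ConnectedComponent : ℚ) * μ
        + ∑ e ∈ G.edgeFinset.filter (fun e => ∀ v ∈ e, ¬ τ v = μ), ω e := by
  set w11 := ∑ e ∈ G.edgeFinset.filter (fun e => ∀ v ∈ e, τ v = μ), ω e with hw11
  set w12 := ∑ e ∈ G.edgeFinset.filter
      (fun e => ¬(∀ v ∈ e, τ v = μ) ∧ ¬(∀ v ∈ e, ¬ τ v = μ)), ω e with hw12
  set w22 := ∑ e ∈ G.edgeFinset.filter (fun e => ∀ v ∈ e, ¬ τ v = μ), ω e with hw22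
  set k := (Fintype.card (G.induce {v | τ v = μ}).ConnectedComponent : ℚ) with hk
  -- component sums
  have hsplit : ∑ C : (G.induce {v | τ v = μ}).ConnectedComponent,
      ((∑ e ∈ (G.induce {v | τ v = μ}).edgeFinset.filter
          (fun e => ∀ v, v ∈ e → (G.induce {v | τ v = μ}).connectedComponentMk v = C),
        ω (e.map Subtype.val))
        - (((Finset.univ.filter (fun v : {v | τ v = μ} =>
            (G.induce {v | τ v = μ}).connectedComponentMk v = C)).card : ℚ) - 1) * μ)
      = w11 - ((Fintype.card {v | τ v = μ} : ℚ) - k) * μ := by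
    rw [Finset.sum_sub_distrib]
    have h1 : ∑ C : (G.induce {v | τ v = μ}).ConnectedComponent,
        ∑ e ∈ (G.induce {v | τ v = μ}).edgeFinset.filter
            (fun e => ∀ v, v ∈ e → (G.induce {v | τ v = μ}).connectedComponentMk v = C),
          ω (e.map Subtype.val) = w11 := by
      rw [comp_edge_sum G ω {v | τ v = μ}, hw11]
      congr 1
    have h2 : ∑ C : (G.induce {v | τ v = μ}).ConnectedComponent,
        (((Finset.univ.filter (fun v : {v | τ v = μ} =>
            (G.induce {v | τ v = μ}).connectedComponentMk v = C)).card : ℚ) - 1) * μ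
        = ((Fintype.card {v | τ v = μ} : ℚ) - k) * μ := by
      rw [← Finset.sum_mul]
      congr 1
      rw [Finset.sum_sub_distrib, comp_card_sum G {v | τ v = μ}]
      simp [hk]
    rw [h1, h2]
  rw [hsplit]
  -- tau sum
  have htau : ∑ v : V, τ v
      = ((univ.filter (fun v => τ v = μ)).card : ℚ) * μ + (w12 + 2 * w22) := by
    rw [← Finset.sum_filter_add_sum_filter_not univ (fun v => τ v = μ)]
    congr 1
    · rw [Finset.sum_congr rfl (fun v hv => (mem_filter.1 hv).2)]
      rw [Finset.sum_const, nsmul_eq_mul]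
    · rw [Finset.sum_congr rfl (fun v hv => ?_), handshake_one G ω (fun v => τ v = μ) hpos]
      rcases hτ v with h | h
      · exact absurd h (mem_filter.1 hv).2
      · exact h
  -- edge sum split
  have hW : ∑ e ∈ G.edgeFinset, ω e = w11 + (w12 + w22) := by
    rw [← Finset.sum_filter_add_sum_filter_not G.edgeFinset (fun e => ∀ v ∈ e, τ v = μ)]
    congr 1
    rw [← Finset.sum_filter_add_sum_filter_not
      (G.edgeFinset.filter (fun e => ¬∀ v ∈ e, τ v = μ)) (fun e => ∀ v ∈ e, ¬ τ v = μ),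
      filter_filter, filter_filter]
    rw [add_comm w12 w22]
    congr 1
    · rw [hw22]
      apply Finset.sum_congr _ (fun _ _ => rfl)
      apply Finset.filter_congr
      intro e he
      constructor
      · rintro ⟨_, h⟩; exact h
      · intro h
        refine ⟨fun hall => ?_, h⟩
        have hm := Sym2.out_fst_mem e
        exact h _ hm (hall _ hm)

  -- card of subtype
  have hcard : (Fintype.card {v | τ v = μ} : ℚ)
      = ((univ.filter (fun v => τ v = μ)).card : ℚ) := by
    norm_cast
    rw [Fintype.card_subtype]
    congr 1
  rw [htau, hW, hcard]
  ring

end Value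


section Upper
variable [Fintype V] [DecidableEq V] (G : SimpleGraph V) [DecidableRel G.Adj]
  (ω : Sym2 V → ℚ) (τ : V → ℚ) (μ : ℚ)

lemma upper_bound (hpos : ∀ e ∈ G.edgeSet, 0 < ω e)
    (hμ : IsLeast (ω '' G.edgeSet) μ) (hμpos : 0 < μ)
    (hτ : ∀ v, τ v = μ ∨ τ v = Influence G ω Finset.univ v) :
    ∃ p : V → ℚ, (∀ v, 0 ≤ p v) ∧ IsTargetVector G ω τ p ∧
      ∑ v : V, p v
        = (Fintype.card (G.induce {v | τ v = μ}).ConnectedComponent : ℚ) * μ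
          + ∑ e ∈ G.edgeFinset.filter (fun e => ∀ v ∈ e, ¬ τ v = μ), ω e := by
  classical
  set GI := G.induce {v | τ v = μ} with hGI
  have hrep : ∀ C : GI.ConnectedComponent,
      ∃ v : {v | τ v = μ}, GI.connectedComponentMk v = C := by
    intro C
    obtain ⟨v, hv⟩ := C.exists_rep
    exact ⟨v, hv⟩
  choose rep hrepeq using hrep
  set repS : Finset V := univ.image (fun C => (rep C : V)) with hrepS
  set ord : V → ℕ := fun v => ((Fintype.equivFin V) v : ℕ) with hord
  have hordinj : Function.Injective ord := by
    intro a b h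
    exact (Fintype.equivFin V).injective (Fin.val_injective h)
  set p : V → ℚ := fun v => if τ v = μ then (if v ∈ repS then μ else 0)
      else τ v - Influence G ω (univ.filter (fun u => τ u = μ ∨ ord u < ord v)) v with hp
  have hpq : ∀ v, τ v = μ → p v = if v ∈ repS then μ else 0 := by
    intro v hv; rw [hp]; simp only [if_pos hv]
  have hpnq : ∀ v, ¬ τ v = μ →
      p v = τ v - Influence G ω (univ.filter (fun u => τ u = μ ∨ ord u < ord v)) v := by
    intro v hv; rw [hp]; simp only [if_neg hv]
  have hnonneg : ∀ v, 0 ≤ p v := by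
    intro v
    by_cases hv : τ v = μ
    · rw [hpq v hv]
      split <;> [exact hμpos.le; rfl]
    · rw [hpnq v hv]
      rcases hτ v with h | h
      · exact absurd h hv
      · rw [sub_nonneg, h]
        exact influence_mono G ω hpos (Finset.subset_univ _) v
  -- representatives are active at time 0
  have hrep0 : ∀ C : GI.ConnectedComponent, (rep C : V) ∈ ActiveP G ω τ p 0 := by
    intro C
    have hq : τ (rep C : V) = μ := (rep C).2
    have hmem : (rep C : V) ∈ repS := mem_image_of_mem _ (mem_univ C)
    refine mem_filter.2 ⟨mem_univ _, ?_⟩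
    rw [hpq _ hq, if_pos hmem, hq]
  -- all of V₁ activates
  have hV1 : ∀ v : V, τ v = μ → ∃ t, v ∈ ActiveP G ω τ p t := by
    intro v hv
    set v' : {v | τ v = μ} := ⟨v, hv⟩ with hv'
    have hreach : GI.Reachable (rep (GI.connectedComponentMk v')) v' :=
      SimpleGraph.ConnectedComponent.exact (hrepeq _)
    obtain ⟨w⟩ := hreach
    have key : ∀ (a b : {v | τ v = μ}) (_ : GI.Walk a b),
        (∃ t, (a : V) ∈ ActiveP G ω τ p t) → ∃ t, (b : V) ∈ ActiveP G ω τ p t := by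
      intro a b w
      induction w with
      | nil => exact id
      | @cons x y z hadj w ih =>
        intro ⟨t, ht⟩
        apply ih
        refine ⟨t + 1, mem_activeP_succ_of_le G ω τ p ?_⟩
        have hadj' : G.Adj (y : V) (x : V) := hadj.symm
        have h1 : μ ≤ ω s((y : V), (x : V)) := hμ.2 ⟨_, hadj', rfl⟩
        have h2 : ω s((y : V), (x : V)) ≤ Influence G ω (ActiveP G ω τ p t) (y : V) :=
          single_le_influence G ω hpos ht hadj'
        have h3 : τ (y : V) = μ := y.2
        linarith [hnonneg (y : V)]
    exact key _ _ w ⟨0, hrep0 _⟩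
  have hT1 : ∃ T, ∀ v : V, τ v = μ → v ∈ ActiveP G ω τ p T := by
    have h : ∀ v : V, ∃ t, (τ v = μ → v ∈ ActiveP G ω τ p t) := by
      intro v
      by_cases hv : τ v = μ
      · obtain ⟨t, ht⟩ := hV1 v hv
        exact ⟨t, fun _ => ht⟩
      · exact ⟨0, fun h => absurd h hv⟩
    choose f hf using h
    refine ⟨univ.sup f, fun v hv => ?_⟩
    exact activeP_mono G ω τ p (Finset.le_sup (mem_univ v)) (hf v hv)
  obtain ⟨T1, hT1⟩ := hT1
  -- everything activates
  have hmain : ∀ n : ℕ, ∀ v : V, ord v = n → ∃ t, v ∈ ActiveP G ω τ p t := by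
    intro n
    induction n using Nat.strong_induction_on with
    | _ n ih =>
      intro v hvn
      by_cases hv : τ v = μ
      · exact hV1 v hv
      · have hstep : ∀ u : V, ∃ s, ((τ u = μ ∨ ord u < ord v) → u ∈ ActiveP G ω τ p s) := by
          intro u
          by_cases hq : τ u = μ
          · exact ⟨T1, fun _ => hT1 u hq⟩
          · by_cases hlt : ord u < ord v
            · obtain ⟨t, ht⟩ := ih (ord u) (hvn ▸ hlt) u rfl
              exact ⟨t, fun _ => ht⟩
            · exact ⟨0, fun h => absurd h (by tauto)⟩
        choose g hg using hstep
        refine ⟨univ.sup g + 1, mem_activeP_succ_of_le G ω τ p ?_⟩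
        have hsub : univ.filter (fun u => τ u = μ ∨ ord u < ord v)
            ⊆ ActiveP G ω τ p (univ.sup g) := by
          intro u hu
          exact activeP_mono G ω τ p (Finset.le_sup (mem_univ u))
            (hg u (mem_filter.1 hu).2)
        have h1 : Influence G ω (univ.filter (fun u => τ u = μ ∨ ord u < ord v)) v
            ≤ Influence G ω (ActiveP G ω τ p (univ.sup g)) v :=
          influence_mono G ω hpos hsub v
        rw [hpnq v hv]
        linarith
  -- the sum
  refine ⟨p, hnonneg, fun v => hmain (ord v) v rfl, ?_⟩
  rw [← Finset.sum_filter_add_sum_filter_not univ (fun v => τ v = μ)]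
  have hs1 : ∑ v ∈ univ.filter (fun v => τ v = μ), p v
      = (Fintype.card GI.ConnectedComponent : ℚ) * μ := by
    rw [Finset.sum_congr rfl (fun v hv => hpq v (mem_filter.1 hv).2),
      Finset.sum_ite_mem]
    have hinter : (univ.filter (fun v => τ v = μ)) ∩ repS = repS := by
      apply Finset.inter_eq_right.2
      intro x hx
      rw [hrepS, mem_image] at hx
      obtain ⟨C, _, rfl⟩ := hx
      exact mem_filter.2 ⟨mem_univ _, (rep C).2⟩
    rw [hinter, Finset.sum_const, nsmul_eq_mul, hrepS]
    congr 2
    rw [Finset.card_image_of_injective _ ?_, card_univ]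
    intro C1 C2 h
    have := Subtype.coe_injective h
    rw [← hrepeq C1, ← hrepeq C2, this]
  have hs2 : ∑ v ∈ univ.filter (fun v => ¬ τ v = μ), p v
      = ∑ e ∈ G.edgeFinset.filter (fun e => ∀ v ∈ e, ¬ τ v = μ), ω e := by
    rw [Finset.sum_congr rfl (fun v hv => hpnq v (mem_filter.1 hv).2),
      Finset.sum_sub_distrib]
    have htau2 : ∑ v ∈ univ.filter (fun v => ¬ τ v = μ), τ v
        = ∑ v ∈ univ.filter (fun v => ¬ τ v = μ), Influence G ω univ v := by
      apply Finset.sum_congr rfl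
      intro v hv
      rcases hτ v with h | h
      · exact absurd h (mem_filter.1 hv).2
      · exact h
    rw [htau2, handshake_one G ω (fun v => τ v = μ) hpos,
      handshake_ord G ω (fun v => τ v = μ) ord hordinj]
    ring
  rw [hs1, hs2]

end Upper


section Lower
variable [Fintype V] [DecidableEq V] (G : SimpleGraph V) [DecidableRel G.Adj]
  (ω : Sym2 V → ℚ) (τ : V → ℚ) (μ : ℚ)

lemma lower_bound (hpos : ∀ e ∈ G.edgeSet, 0 < ω e)
    (hμ : IsLeast (ω '' G.edgeSet) μ) (hμpos : 0 < μ)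
    (hτ : ∀ v, τ v = μ ∨ τ v = Influence G ω Finset.univ v)
    (p : V → ℚ) (hpnn : ∀ v, 0 ≤ p v) (htv : IsTargetVector G ω τ p) :
    (Fintype.card (G.induce {v | τ v = μ}).ConnectedComponent : ℚ) * μ
      + ∑ e ∈ G.edgeFinset.filter (fun e => ∀ v ∈ e, ¬ τ v = μ), ω e
    ≤ ∑ v : V, p v := by
  classical
  set GI := G.induce {v | τ v = μ} with hGI
  set time : V → ℕ := fun v => Nat.find (htv v) with htime
  have hmemA : ∀ (t : ℕ) (v : V), v ∈ ActiveP G ω τ p t ↔ time v ≤ t := by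
    intro t v
    constructor
    · intro h
      exact Nat.find_min' (htv v) h
    · intro h
      exact activeP_mono G ω τ p h (Nat.find_spec (htv v))
  -- the key per-vertex inequality
  have key : ∀ v : V,
      τ v - Influence G ω (univ.filter (fun u => time u < time v)) v ≤ p v := by
    intro v
    rcases h : time v with _ | t
    · have hv0 : v ∈ ActiveP G ω τ p 0 := (hmemA 0 v).2 (le_of_eq h)
      have hempty : univ.filter (fun u => time u < 0) = ∅ := by simp
      rw [hempty]
      have h2 : Influence G ω (∅ : Finset V) v = 0 := by simp [Influence]
      rw [h2]
      linarith [(mem_filter.1 hv0).2]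
    · have hvt : v ∈ ActiveP G ω τ p (t + 1) := (hmemA _ v).2 (le_of_eq h)
      have hnot : v ∉ ActiveP G ω τ p t := by
        intro hc
        have := (hmemA t v).1 hc
        omega
      rcases mem_union.1 hvt with hc | hc
      · exact absurd hc hnot
      · have hle : τ v ≤ Influence G ω (ActiveP G ω τ p t) v + p v := (mem_filter.1 hc).2
        have hAt : ActiveP G ω τ p t = univ.filter (fun u => time u < t + 1) := by
          ext u
          rw [hmemA t u, mem_filter]
          constructor
          · intro hu; exact ⟨mem_univ _, by omega⟩
          · intro ⟨_, hu⟩; omega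
        rw [hAt] at hle
        linarith
  -- lower bound for non-μ vertices
  have hV2 : ∀ v : V, ¬ τ v = μ →
      Influence G ω (univ.filter (fun u => ¬ τ u = μ ∧ time v ≤ time u)) v
        + Influence G ω (univ.filter (fun u => τ u = μ ∧ time v ≤ time u)) v
      ≤ p v := by
    intro v hv
    have htv2 : τ v = Influence G ω univ v := (hτ v).resolve_left hv
    have hsplit0 : Influence G ω univ v
        = Influence G ω (univ.filter (fun u => time u < time v)) v
          + Influence G ω (univ.filter (fun u => time v ≤ time u)) v := by
      have h0 : (univ : Finset V) = univ.filter (fun u => time u < time v ∨ time v ≤ time u) := by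
        ext u; simp; omega
      rw [h0, influence_split G ω (fun u => time u < time v ∨ time v ≤ time u)
        (fun u => time u < time v) v]
      congr 2
      · ext x; simp only [mem_filter, mem_univ, true_and]; try omega
      · ext x; simp only [mem_filter, mem_univ, true_and]; try omega
    have hsplit1 : Influence G ω (univ.filter (fun u => time v ≤ time u)) v
        = Influence G ω (univ.filter (fun u => ¬ τ u = μ ∧ time v ≤ time u)) v
          + Influence G ω (univ.filter (fun u => τ u = μ ∧ time v ≤ time u)) v := by
      rw [influence_split G ω (fun u => time v ≤ time u) (fun u => ¬ τ u = μ) v]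
      congr 2
      · ext x; simp only [mem_filter, mem_univ, true_and]; try tauto
      · ext x; simp only [mem_filter, mem_univ, true_and]; try tauto
    have hk := key v
    rw [htv2, hsplit0, hsplit1] at hk
    linarith
  -- minimal-time representatives of components
  have hFC : ∀ C : GI.ConnectedComponent,
      ∃ m : {v | τ v = μ}, (GI.connectedComponentMk m = C ∧
        ∀ u : {v | τ v = μ}, GI.connectedComponentMk u = C → time (m : V) ≤ time (u : V)) := by
    intro C
    have hne : (univ.filter (fun u : {v | τ v = μ} => GI.connectedComponentMk u = C)).Nonempty := by
      obtain ⟨w, hw⟩ := C.exists_rep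
      exact ⟨w, mem_filter.2 ⟨mem_univ _, hw⟩⟩
    obtain ⟨m, hm1, hm2⟩ := Finset.exists_min_image (univ.filter (fun u : {v | τ v = μ} => GI.connectedComponentMk u = C)) (fun u => time (u : V)) hne
    refine ⟨m, (mem_filter.1 hm1).2, fun u hu => hm2 u (mem_filter.2 ⟨mem_univ _, hu⟩)⟩
  choose m hm1 hm2 using hFC
  set M : Finset V := univ.image (fun C => (m C : V)) with hM
  have hminj : Function.Injective (fun C => (m C : V)) := by
    intro C1 C2 h
    have h2 := Subtype.coe_injective h
    rw [← hm1 C1, ← hm1 C2, h2]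
  have hMq : ∀ v ∈ M, τ v = μ := by
    intro v hv
    rw [hM, mem_image] at hv
    obtain ⟨C, _, rfl⟩ := hv
    exact (m C).2
  -- earlier neighbors of minimal representatives are outside V₁
  have hmear : ∀ C : GI.ConnectedComponent,
      Influence G ω (univ.filter (fun u => time u < time (m C : V))) (m C : V)
        = Influence G ω (univ.filter
            (fun u => ¬ τ u = μ ∧ time u < time (m C : V))) (m C : V) := by
    intro C
    apply influence_congr_filter
    intro y hadj
    constructor
    · intro hy
      refine ⟨fun hq => ?_, hy⟩
      have hadj' : GI.Adj (m C) ⟨y, hq⟩ := hadj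
      have hcomp : GI.connectedComponentMk ⟨y, hq⟩ = C := by
        rw [← hm1 C]
        exact (SimpleGraph.ConnectedComponent.connectedComponentMk_eq_of_adj hadj').symm
      have := hm2 C ⟨y, hq⟩ hcomp
      simp only at this
      omega
    · intro ⟨_, h⟩; exact h
  -- assemble
  have hq_split : ∑ v : V, p v
      = ∑ v ∈ univ.filter (fun v => τ v = μ), p v
        + ∑ v ∈ univ.filter (fun v => ¬ τ v = μ), p v :=
    (Finset.sum_filter_add_sum_filter_not univ (fun v => τ v = μ) p).symm
  have hMsub : M ⊆ univ.filter (fun v => τ v = μ) :=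
    fun v hv => mem_filter.2 ⟨mem_univ _, hMq v hv⟩
  have h1 : ∑ v ∈ M, p v ≤ ∑ v ∈ univ.filter (fun v => τ v = μ), p v :=
    Finset.sum_le_sum_of_subset_of_nonneg hMsub (fun v _ _ => hpnn v)
  have h2 : ∑ v ∈ M, p v = ∑ C : GI.ConnectedComponent, p (m C : V) := by
    rw [hM]
    apply Finset.sum_image
    intro C1 _ C2 _ h
    exact hminj h
  set eC : GI.ConnectedComponent → ℚ := fun C =>
    Influence G ω (univ.filter (fun u => ¬ τ u = μ ∧ time u < time (m C : V))) (m C : V)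
    with heC
  have h3 : ∀ C : GI.ConnectedComponent, μ - eC C ≤ p (m C : V) := by
    intro C
    have hk := key (m C : V)
    rw [hmear C] at hk
    have hqm : τ (m C : V) = μ := (m C).2
    rw [hqm] at hk
    exact hk
  have h4 : (Fintype.card GI.ConnectedComponent : ℚ) * μ
      - ∑ C : GI.ConnectedComponent, eC C ≤ ∑ C : GI.ConnectedComponent, p (m C : V) := by
    have := Finset.sum_le_sum (fun C (_ : C ∈ univ) => h3 C)
    rw [Finset.sum_sub_distrib, Finset.sum_const, card_univ, nsmul_eq_mul] at this
    exact this
  have h5 : ∑ v ∈ univ.filter (fun v => ¬ τ v = μ),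
        (Influence G ω (univ.filter (fun u => ¬ τ u = μ ∧ time v ≤ time u)) v
          + Influence G ω (univ.filter (fun u => τ u = μ ∧ time v ≤ time u)) v)
      ≤ ∑ v ∈ univ.filter (fun v => ¬ τ v = μ), p v :=
    Finset.sum_le_sum (fun v hv => hV2 v (mem_filter.1 hv).2)
  rw [Finset.sum_add_distrib] at h5
  have h6 : ∑ e ∈ G.edgeFinset.filter (fun e => ∀ v ∈ e, ¬ τ v = μ), ω e
      ≤ ∑ v ∈ univ.filter (fun v => ¬ τ v = μ),
          Influence G ω (univ.filter (fun u => ¬ τ u = μ ∧ time v ≤ time u)) v :=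
    handshake_time G ω (fun v => τ v = μ) hpos time
  -- transpose comparison for the V₁-V₂ edges
  have h7 : ∑ C : GI.ConnectedComponent, eC C
      ≤ ∑ v ∈ univ.filter (fun v => ¬ τ v = μ),
          Influence G ω (univ.filter (fun u => τ u = μ ∧ time v ≤ time u)) v := by
    have hL1 : ∑ v ∈ univ.filter (fun v => ¬ τ v = μ),
        Influence G ω (univ.filter (fun u => τ u = μ ∧ time v ≤ time u)) v
        = ∑ d ∈ (univ : Finset (V × V)).filter
            (fun d => s(d.1, d.2) ∈ G.edgeFinset
              ∧ (¬ τ d.1 = μ ∧ (τ d.2 = μ ∧ time d.1 ≤ time d.2))), ω s(d.1, d.2) :=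
      influence_double_sum G ω (fun v => ¬ τ v = μ) (fun v u => τ u = μ ∧ time v ≤ time u)
    set P1 : Finset (V × V) := (M ×ˢ univ).filter
        (fun d => (¬ τ d.2 = μ ∧ time d.2 < time d.1) ∧ G.Adj d.1 d.2) with hP1
    have hEC : ∑ C : GI.ConnectedComponent, eC C = ∑ d ∈ P1, ω s(d.1, d.2) := by
      rw [hP1, sum_pairs M univ
        (fun x y => (¬ τ y = μ ∧ time y < time x) ∧ G.Adj x y) (fun x y => ω s(x, y))]
      have himg : ∑ v ∈ M, ∑ y ∈ univ.filter
            (fun y => (¬ τ y = μ ∧ time y < time v) ∧ G.Adj v y), ω s(v, y)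
          = ∑ C : GI.ConnectedComponent, ∑ y ∈ univ.filter
            (fun y => (¬ τ y = μ ∧ time y < time (m C : V)) ∧ G.Adj (m C : V) y),
              ω s((m C : V), y) := by
        rw [hM]
        apply Finset.sum_image
        intro C1 _ C2 _ h
        exact hminj h
      rw [himg]
      apply Finset.sum_congr rfl
      intro C _
      rw [heC]
      simp only [Influence, filter_filter]
    rw [hL1, hEC]
    have hswap : ∑ d ∈ P1, ω s(d.1, d.2) = ∑ d ∈ P1.image Prod.swap, ω s(d.1, d.2) := by
      rw [Finset.sum_image (fun x _ y _ h => Prod.swap_injective h)]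
      apply Finset.sum_congr rfl
      intro d _
      simp only [Prod.fst_swap, Prod.snd_swap]
      rw [Sym2.eq_swap]
    rw [hswap]
    apply Finset.sum_le_sum_of_subset_of_nonneg
    · intro d hd
      obtain ⟨c, hc, rfl⟩ := mem_image.1 hd
      rw [hP1, mem_filter, mem_product] at hc
      obtain ⟨⟨hcM, -⟩, ⟨hc2, hc3⟩, hc4⟩ := hc
      simp only [mem_filter, mem_univ, true_and, Prod.fst_swap, Prod.snd_swap]
      refine ⟨?_, hc2, hMq _ hcM, le_of_lt hc3⟩
      rw [SimpleGraph.mem_edgeFinset, SimpleGraph.mem_edgeSet]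
      exact hc4.symm
    · intro d hd _
      rw [mem_filter] at hd
      exact (hpos _ (SimpleGraph.mem_edgeFinset.1 hd.2.1)).le
  rw [hq_split]
  rw [h2] at h1
  linarith

end Lower

/-- when every threshold equals either the minimum edge weight `μ`
or the full incident weight, the optimal target-vector size is
`∑ τ − ∑ ω + ∑_C (∑_{e ∈ E(C)} ω(e) − (|C|−1)μ)`, the last sum being over
connected components `C` of the subgraph induced on `V₁ = {v : τ v = μ}`. -/
theorem optimal_target_vector_mu_or_full [Fintype V] [DecidableEq V] (G : SimpleGraph V)
    [DecidableRel G.Adj] (ω : Sym2 V → ℚ) (τ : V → ℚ) (μ : ℚ)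
    (hne : G.edgeSet.Nonempty) (hpos : ∀ e ∈ G.edgeSet, 0 < ω e)
    (hμ : IsLeast (ω '' G.edgeSet) μ) (hμpos : 0 < μ)
    (hτ : ∀ v, τ v = μ ∨ τ v = Influence G ω Finset.univ v) :
    IsLeast {s : ℚ | ∃ p : V → ℚ, (∀ v, 0 ≤ p v) ∧ IsTargetVector G ω τ p ∧
        ∑ v : V, p v = s}
      (∑ v : V, τ v - ∑ e ∈ G.edgeFinset, ω e
        + ∑ C : (G.induce {v | τ v = μ}).ConnectedComponent,
            ((∑ e ∈ (G.induce {v | τ v = μ}).edgeFinset.filter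
                (fun e => ∀ v, v ∈ e →
                  (G.induce {v | τ v = μ}).connectedComponentMk v = C),
              ω (e.map Subtype.val))
              - (((Finset.univ.filter (fun v : {v | τ v = μ} =>
                  (G.induce {v | τ v = μ}).connectedComponentMk v = C)).card : ℚ) - 1)
                * μ)) := by
  rw [value_eq G ω τ μ hpos hτ]
  constructor
  · obtain ⟨p, h1, h2, h3⟩ := upper_bound G ω τ μ hpos hμ hμpos hτ
    exact ⟨p, h1, h2, h3⟩
  · rintro s ⟨p, hnn, htv, rfl⟩
    exact lower_bound G ω τ μ hpos hμ hμpos hτ p hnn htv
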